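/- Let G be any connected graph on n≥3 vertices. Then there exists an n×n positive definite matrix A with all entries nonzero, such that |a_{ii}| < Σ_{j≠i}|a_{ij}| for every row i (A is not diagonally dominant in any row), the thresholded matrix A_G is positive definite, and A_G is not diagonally dominant. -/

import Mathlib

/-!
Take `A = J + diag D` with `J` the all-ones matrix and `0 < D i < n - 2`: it is positive
definite as a positive semidefinite plus a positive diagonal matrix, has no zero entry, and in
every row the off-diagonal mass `n - 1` exceeds the diagonal entry `1 + D i`.

If `G` is complete then `A_G = A`. Otherwise write `D i = deg i - 1 + c i`, so that
`A_G = diag c + (Deg + Adj)`, where the signless Laplacian `Deg + Adj` has quadratic form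
`∑_{ij ∈ E} (x i + x j)²`. Choose `c = -η` (with `η` of order `1 / n`) on a nonempty set `S` of
vertices of degree at least `2` that contains every universal vertex and whose members have a
common neighbour `u`, and `c = 1 / 2` elsewhere; these constraints are exactly what keeps
`0 < D i < n - 2`. The edges of the star from `u` to `S` absorb the negative diagonal on `S`,
so `A_G` is positive definite, while the row of a vertex of `S` has diagonal entry
`deg - η` against off-diagonal mass `deg`.
-/

def threshold {n : ℕ} (G : SimpleGraph (Fin n)) [DecidableRel G.Adj]
    (A : Matrix (Fin n) (Fin n) ℝ) : Matrix (Fin n) (Fin n) ℝ :=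
  Matrix.of fun i j => if i = j ∨ G.Adj i j then A i j else 0

open Finset Matrix

namespace SimpleGraph

variable {V : Type*} [Fintype V] (G : SimpleGraph V) [DecidableRel G.Adj]

theorem Connected.exists_two_le_degree (hconn : G.Connected) (hV : 3 ≤ Fintype.card V) :
    ∃ v, 2 ≤ G.degree v := by
  by_contra! h
  have hdeg : 2 * #G.edgeFinset ≤ Fintype.card V := by
    rw [← sum_degrees_eq_twice_card_edges, ← card_univ, card_eq_sum_ones]
    exact sum_le_sum fun v _ => Nat.le_of_lt_succ (h v)
  have hedges := hconn.card_vert_le_card_edgeSet_add_one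
  rw [Nat.card_eq_fintype_card, Nat.card_eq_fintype_card, ← edgeFinset_card] at hedges
  omega

theorem Connected.exists_star (hconn : G.Connected) (hV : 3 ≤ Fintype.card V) (hG : G ≠ ⊤) :
    ∃ u, ∃ S : Finset V, S.Nonempty ∧ (∀ v ∈ S, G.Adj u v) ∧ (∀ v ∈ S, 2 ≤ G.degree v) ∧
      ∀ v, G.IsUniversal v → v ∈ S := by
  classical
  by_cases huniv : ∃ v, G.IsUniversal v
  · obtain ⟨v₀, hv₀⟩ := huniv
    obtain ⟨u, hu⟩ : ∃ u, ¬G.IsUniversal u := by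
      simpa [eq_top_iff_forall_isUniversal] using hG
    refine ⟨u, univ.filter G.IsUniversal, ⟨v₀, by simpa using hv₀⟩, fun v hv => ?_,
      fun v hv => ?_, fun v hv => by simpa using hv⟩
    · rw [mem_filter] at hv
      exact (hv.2 (by rintro rfl; exact hu hv.2)).symm
    · rw [mem_filter, ← degree_eq_card_sub_one] at hv
      omega
  · obtain ⟨v, hv⟩ := hconn.exists_two_le_degree G hV
    obtain ⟨u, hu⟩ := (G.degree_pos_iff_exists_adj v).1 (by omega)
    exact ⟨u, {v}, singleton_nonempty v, by simpa using hu.symm, by simpa using hv,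
      fun w hw => (huniv ⟨w, hw⟩).elim⟩

variable [DecidableEq V]

theorem dotProduct_mulVec_degMatrix_add_adjMatrix {R : Type*} [Field R] [CharZero R]
    (x : V → R) :
    x ⬝ᵥ (G.degMatrix R + G.adjMatrix R) *ᵥ x =
      (∑ i, ∑ j, if G.Adj i j then (x i + x j) ^ 2 else 0) / 2 := by
  simp_rw [add_mulVec, dotProduct_add, dotProduct_mulVec_degMatrix,
    dotProduct_mulVec_adjMatrix, ← sum_add_distrib, degree_eq_sum_if_adj, sum_mul, ite_mul,
    one_mul, zero_mul, ← sum_add_distrib, ite_add_ite, add_zero]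
  rw [← add_self_div_two (∑ x_1 : V, ∑ x_2 : V, _)]
  conv_lhs => enter [1, 2, 2, i, 2, j]; rw [if_congr (adj_comm G i j) rfl rfl]
  conv_lhs => enter [1, 2]; rw [Finset.sum_comm]
  simp_rw [← sum_add_distrib, ite_add_ite]
  congr 2 with i
  congr 2 with j
  ring_nf

theorem two_mul_sum_sq_add_le_of_forall_adj {u : V} {S : Finset V} (hS : ∀ v ∈ S, G.Adj u v)
    (x : V → ℝ) :
    2 * ∑ v ∈ S, (x u + x v) ^ 2 ≤ ∑ i, ∑ j, if G.Adj i j then (x i + x j) ^ 2 else 0 := by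
  set f : V → V → ℝ := fun i j => if G.Adj i j then (x i + x j) ^ 2 else 0
  have hf : ∀ i j, 0 ≤ f i j := fun i j => by positivity
  have hu : u ∉ S := fun h => G.loopless.irrefl u (hS u h)
  have hrow : ∀ i (T : Finset V), ∑ j ∈ T, f i j ≤ ∑ j, f i j := fun i T =>
    sum_le_sum_of_subset_of_nonneg (subset_univ T) fun j _ _ => hf i j
  calc 2 * ∑ v ∈ S, (x u + x v) ^ 2
      = ∑ v ∈ S, f u v + ∑ v ∈ S, f v u := by
        rw [two_mul]
        congr 1 <;> refine sum_congr rfl fun v hv => ?_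
        · simp [f, hS v hv]
        · simp [f, (hS v hv).symm, add_comm]
    _ ≤ ∑ j, f u j + ∑ v ∈ S, ∑ j, f v j :=
        add_le_add (hrow u S) (sum_le_sum fun v _ => hrow v {u} |>.trans' (by simp))
    _ = ∑ i ∈ insert u S, ∑ j, f i j := (sum_insert hu (f := fun i => ∑ j, f i j)).symm
    _ ≤ ∑ i, ∑ j, f i j :=
        sum_le_sum_of_subset_of_nonneg (subset_univ _) fun i _ _ => sum_nonneg fun j _ => hf i j

theorem posSemidef_diagonal_add_degMatrix_add_adjMatrix {u : V} {S : Finset V}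
    (hS : ∀ v ∈ S, G.Adj u v) {β : ℝ} (hβ : β < 1) {c : V → ℝ} (hcS : ∀ v ∈ S, -β ≤ c v)
    (hcu : #S * β ≤ (1 - β) * c u) (hc : ∀ j, j ≠ u → j ∉ S → 0 ≤ c j) :
    (diagonal c + G.degMatrix ℝ + G.adjMatrix ℝ).PosSemidef := by
  refine .of_dotProduct_mulVec_nonneg
    (((isHermitian_diagonal c).add (G.isHermitian_degMatrix ℝ)).add (G.isHermitian_adjMatrix ℝ))
    fun x => ?_
  have hu : u ∉ S := fun h => G.loopless.irrefl u (hS u h)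
  rw [star_trivial, add_assoc, add_mulVec, dotProduct_add,
    dotProduct_mulVec_degMatrix_add_adjMatrix]
  have hdiag : c u * x u ^ 2 + ∑ v ∈ S, c v * x v ^ 2 ≤ x ⬝ᵥ diagonal c *ᵥ x := by
    have hform : x ⬝ᵥ diagonal c *ᵥ x = ∑ j, c j * x j ^ 2 := by
      simp only [dotProduct, mulVec_diagonal]
      exact sum_congr rfl fun j _ => by ring
    rw [hform, ← sum_insert hu (f := fun j => c j * x j ^ 2)]
    refine sum_le_sum_of_subset_of_nonneg (subset_univ _) fun j _ hj => ?_
    rw [mem_insert, not_or] at hj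
    exact mul_nonneg (hc j hj.1 hj.2) (sq_nonneg _)
  have hstar := G.two_mul_sum_sq_add_le_of_forall_adj hS x
  -- `(1 - β) (c v b² + (a + b)²) + β a² = (1 - β) (c v + β) b² + (a + (1 - β) b)²`
  have hterm : ∀ v ∈ S, -(β * x u ^ 2) ≤ (1 - β) * (c v * x v ^ 2 + (x u + x v) ^ 2) :=
    fun v hv => by
      nlinarith [sq_nonneg (x u + (1 - β) * x v), mul_nonneg (mul_nonneg (sub_nonneg.2 hβ.le)
        (neg_le_iff_add_nonneg.1 (hcS v hv))) (sq_nonneg (x v))]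
  have hsum := sum_le_sum hterm
  rw [sum_const, nsmul_eq_mul, ← mul_sum, sum_add_distrib] at hsum
  have hcu' := mul_le_mul_of_nonneg_right hcu (sq_nonneg (x u))
  nlinarith

theorem posDef_diagonal_add_degMatrix_add_adjMatrix {u : V} {S : Finset V}
    (hS : ∀ v ∈ S, G.Adj u v) {β η : ℝ} (hβ : β < 1) (hη : 0 < η) {c : V → ℝ}
    (hcS : ∀ v ∈ S, -β ≤ c v - η) (hcu : #S * β ≤ (1 - β) * (c u - η))
    (hc : ∀ j, j ≠ u → j ∉ S → η ≤ c j) :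
    (diagonal c + G.degMatrix ℝ + G.adjMatrix ℝ).PosDef := by
  have hpsd := G.posSemidef_diagonal_add_degMatrix_add_adjMatrix hS hβ (c := fun j => c j - η)
    hcS hcu fun j hju hjS => sub_nonneg.2 (hc j hju hjS)
  convert PosDef.posSemidef_add hpsd (PosDef.diagonal (d := fun _ : V => η) fun _ => hη) using 1
  simp only [add_right_comm _ _ (diagonal fun _ => η), diagonal_add, sub_add_cancel]

theorem sum_erase_abs_diagonal_add_degMatrix_add_adjMatrix (c : V → ℝ) (i : V) :
    ∑ j ∈ univ.erase i, |(diagonal c + G.degMatrix ℝ + G.adjMatrix ℝ) i j| = G.degree i := by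
  rw [G.degree_eq_sum_if_adj, ← sum_erase_add _ _ (mem_univ i)]
  simp only [G.loopless.irrefl i, if_false, add_zero]
  refine sum_congr rfl fun j hj => ?_
  have hij := (ne_of_mem_erase hj).symm
  by_cases hadj : G.Adj i j <;> simp [degMatrix, hij, hadj]

theorem abs_diagonal_add_degMatrix_add_adjMatrix_lt_sum {c : V → ℝ} {i : V} (hc : c i < 0)
    (hdeg : -c i ≤ G.degree i) :
    |(diagonal c + G.degMatrix ℝ + G.adjMatrix ℝ) i i| <
      ∑ j ∈ univ.erase i, |(diagonal c + G.degMatrix ℝ + G.adjMatrix ℝ) i j| := by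
  have hii : (diagonal c + G.degMatrix ℝ + G.adjMatrix ℝ) i i = c i + G.degree i := by
    simp [degMatrix]
  rw [G.sum_erase_abs_diagonal_add_degMatrix_add_adjMatrix, hii, abs_lt]
  constructor <;> linarith

noncomputable def starExcess (S : Finset V) (j : V) : ℝ :=
  if j ∈ S then -(8 * Fintype.card V : ℝ)⁻¹ else 1 / 2

theorem starExcess_mem_Ioo_of_mem {S : Finset V} {j : V} (hj : j ∈ S) :
    starExcess S j ∈ Set.Ioo (-1) 0 := by
  have hV : (1 : ℝ) ≤ Fintype.card V := by exact_mod_cast Fintype.card_pos_iff.2 ⟨j⟩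
  rw [starExcess, if_pos hj, Set.mem_Ioo, neg_lt_neg_iff, neg_lt_zero]
  exact ⟨inv_lt_one_of_one_lt₀ (by linarith), by positivity⟩

theorem Connected.degree_sub_one_add_starExcess_mem_Ioo [Nontrivial V] (hconn : G.Connected)
    {S : Finset V} (hS2 : ∀ v ∈ S, 2 ≤ G.degree v) (hSuniv : ∀ v, G.IsUniversal v → v ∈ S)
    (j : V) :
    0 < (G.degree j : ℝ) - 1 + starExcess S j ∧
      (G.degree j : ℝ) - 1 + starExcess S j + 2 < Fintype.card V := by
  by_cases hj : j ∈ S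
  · have h2 : (2 : ℝ) ≤ G.degree j := by exact_mod_cast hS2 j hj
    have hlt : (G.degree j : ℝ) + 1 ≤ Fintype.card V := by
      exact_mod_cast G.degree_lt_card_verts j
    obtain ⟨hc₁, hc₀⟩ := starExcess_mem_Ioo_of_mem hj
    constructor <;> linarith
  · have h1 : (1 : ℝ) ≤ G.degree j := by
      exact_mod_cast (hconn.preconnected.degree_pos_of_nontrivial j :)
    have hlt : (G.degree j : ℝ) + 2 ≤ Fintype.card V := by
      have := (G.degree_lt_card_sub_one j).2 fun h => hj (hSuniv j h)
      exact_mod_cast (by omega : G.degree j + 2 ≤ Fintype.card V)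
    simp only [starExcess, if_neg hj]
    constructor <;> linarith

theorem posDef_diagonal_starExcess_add_degMatrix_add_adjMatrix {u : V} {S : Finset V}
    (hS : ∀ v ∈ S, G.Adj u v) :
    (diagonal (starExcess S) + G.degMatrix ℝ + G.adjMatrix ℝ).PosDef := by
  set η : ℝ := (8 * Fintype.card V : ℝ)⁻¹
  have hV : (1 : ℝ) ≤ Fintype.card V := by exact_mod_cast Fintype.card_pos_iff.2 ⟨u⟩
  have hη : 0 < η := by positivity
  have hηV : η * Fintype.card V = 1 / 8 := by simp only [η]; field_simp
  have hηle : η ≤ 1 / 8 := by nlinarith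
  have hcard : (#S : ℝ) ≤ Fintype.card V := by exact_mod_cast card_le_univ S
  have hu : u ∉ S := fun h => G.loopless.irrefl u (hS u h)
  refine G.posDef_diagonal_add_degMatrix_add_adjMatrix hS (β := 2 * η) (by linarith) hη
    (fun v hv => by simp only [starExcess, if_pos hv]; linarith) ?_
    fun j _ hj => by simp only [starExcess, if_neg hj]; linarith
  simp only [starExcess, if_neg hu]
  nlinarith

end SimpleGraph

section OnesAddDiagonal

variable {V : Type*} [DecidableEq V]

def onesAddDiagonal (D : V → ℝ) : Matrix V V ℝ := vecMulVec 1 1 + diagonal D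

theorem onesAddDiagonal_apply (D : V → ℝ) (i j : V) :
    onesAddDiagonal D i j = if i = j then 1 + D i else 1 := by
  rcases eq_or_ne i j with rfl | hij <;> simp [onesAddDiagonal, *]

theorem onesAddDiagonal_apply_ne_zero {D : V → ℝ} (hD : ∀ i, 0 < D i) (i j : V) :
    onesAddDiagonal D i j ≠ 0 := by
  rw [onesAddDiagonal_apply]
  split_ifs
  · exact (add_pos one_pos (hD i)).ne'
  · exact one_ne_zero

variable [Fintype V]

theorem posDef_onesAddDiagonal {D : V → ℝ} (hD : ∀ i, 0 < D i) :
    (onesAddDiagonal D).PosDef := by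
  have hJ := posSemidef_vecMulVec_self_star (1 : V → ℝ)
  rw [star_trivial] at hJ
  exact PosDef.posSemidef_add hJ (PosDef.diagonal hD)

theorem abs_onesAddDiagonal_lt_sum {D : V → ℝ} {i : V} (hD0 : 0 < D i)
    (hD : D i + 2 < Fintype.card V) :
    |onesAddDiagonal D i i| < ∑ j ∈ univ.erase i, |onesAddDiagonal D i j| := by
  have hoff : ∀ j ∈ univ.erase i, |onesAddDiagonal D i j| = 1 := fun j hj => by
    simp [onesAddDiagonal_apply, (ne_of_mem_erase hj).symm]
  have hcard : 1 ≤ Fintype.card V := Fintype.card_pos_iff.2 ⟨i⟩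
  rw [sum_congr rfl hoff, sum_const, card_erase_of_mem (mem_univ i), card_univ, nsmul_one,
    Nat.cast_sub hcard, onesAddDiagonal_apply, if_pos rfl, abs_of_pos (by positivity)]
  push_cast
  linarith

end OnesAddDiagonal

theorem threshold_top {n : ℕ} [DecidableRel (⊤ : SimpleGraph (Fin n)).Adj]
    (A : Matrix (Fin n) (Fin n) ℝ) : threshold ⊤ A = A := by
  ext i j
  simp [threshold, em]

theorem threshold_onesAddDiagonal {n : ℕ} (G : SimpleGraph (Fin n)) [DecidableRel G.Adj]
    (c : Fin n → ℝ) :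
    threshold G (onesAddDiagonal fun j => (G.degree j : ℝ) - 1 + c j) =
      diagonal c + G.degMatrix ℝ + G.adjMatrix ℝ := by
  ext i j
  rcases eq_or_ne i j with rfl | hij
  · simp [threshold, onesAddDiagonal_apply, SimpleGraph.degMatrix]
    ring
  · by_cases hadj : G.Adj i j <;>
      simp [threshold, onesAddDiagonal_apply, SimpleGraph.degMatrix, hij, hadj]

open Finset in
theorem stmt_17 {n : ℕ} (hn : 3 ≤ n) (G : SimpleGraph (Fin n)) [DecidableRel G.Adj]
    (hconn : G.Connected) :
    ∃ A : Matrix (Fin n) (Fin n) ℝ, A.PosDef ∧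
      (∀ i j : Fin n, A i j ≠ 0) ∧
      (∀ i : Fin n, |A i i| < ∑ j ∈ univ.erase i, |A i j|) ∧
      (threshold G A).PosDef ∧
      ¬ (∀ i : Fin n, ∑ j ∈ univ.erase i, |threshold G A i j| ≤ |threshold G A i i|) := by
  by_cases hG : G = ⊤
  · subst hG
    have hn' : (3 : ℝ) ≤ n := by exact_mod_cast hn
    have hrow (i : Fin n) := abs_onesAddDiagonal_lt_sum (D := fun _ => 1 / 2) (i := i)
      one_half_pos (by norm_num; linarith)
    refine ⟨_, posDef_onesAddDiagonal fun _ => one_half_pos,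
      onesAddDiagonal_apply_ne_zero fun _ => one_half_pos, hrow, ?_, ?_⟩ <;> rw [threshold_top]
    · exact posDef_onesAddDiagonal fun _ => one_half_pos
    · exact fun h => (h ⟨0, by omega⟩).not_gt (hrow _)
  have : Nontrivial (Fin n) := Fin.nontrivial_iff_two_le.2 (by omega)
  obtain ⟨u, S, ⟨i₀, hi₀⟩, hS, hS2, hSuniv⟩ := hconn.exists_star G (by simpa) hG
  have hD := hconn.degree_sub_one_add_starExcess_mem_Ioo G hS2 hSuniv
  refine ⟨_, posDef_onesAddDiagonal fun j => (hD j).1,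
    onesAddDiagonal_apply_ne_zero fun j => (hD j).1,
    fun i => abs_onesAddDiagonal_lt_sum (hD i).1 (hD i).2, ?_, ?_⟩ <;>
    rw [threshold_onesAddDiagonal]
  · exact G.posDef_diagonal_starExcess_add_degMatrix_add_adjMatrix hS
  · have h2 : (2 : ℝ) ≤ G.degree i₀ := by exact_mod_cast hS2 i₀ hi₀
    obtain ⟨hc₁, hc₀⟩ := SimpleGraph.starExcess_mem_Ioo_of_mem hi₀
    exact fun h => (h i₀).not_gt <|
      G.abs_diagonal_add_degMatrix_add_adjMatrix_lt_sum hc₀ (by linarith)
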